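/- arXiv:2002.01615 — 3 statements merged into one kernel-verified Lean document; each statement's English description precedes it below -/
import Mathlib

section
/- Let n ≥ 1, let x, y : {1,…,n} → ℝ be nondecreasing (x_1 ≤ … ≤ x_n and y_1 ≤ … ≤ y_n), and let p ≥ 1 be a real number. Let u ∈ ℝ^n be the uniform probability vector with all entries 1/n. Then the infimum over P ∈ U(u,u) of ∑_{i,j} P_{ij} |x_i − y_j|^p is attained and equals (1/n) ∑_{i=1}^n |x_i − y_i|^p; in particular the identity matching of the sorted points is an optimal 1D transport plan. -/
/-!
Since `t ↦ |t| ^ p` is convex and both point sets are sorted, the cost `c i j = |x i - y j| ^ p`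
is a Monge array: `c i j + c i' j' ≤ c i j' + c i' j` for `i ≤ i'`, `j ≤ j'`. A Monge cost admits
dual potentials `φ i + ψ j ≤ c i j` that are tight on the diagonal (take `φ` to be the partial sums
of the increments `c (k + 1) k - c k k`), and weak duality then bounds the cost of every plan in
`U(u, u)` from below by the cost of the identity matching.
-/

open Finset

/-- The transportation polytope `U(a,b)`. -/
def transportPolytope {n m : ℕ} (a : Fin n → ℝ) (b : Fin m → ℝ) :
    Set (Fin n → Fin m → ℝ) :=
  {P | (∀ i j, 0 ≤ P i j) ∧ (∀ i, ∑ j, P i j = a i) ∧ (∀ j, ∑ i, P i j = b j)}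

theorem ConvexOn.map_add_map_le_of_add_eq {𝕜 : Type*} [Field 𝕜] [LinearOrder 𝕜]
    [IsStrictOrderedRing 𝕜] {s : Set 𝕜} {f : 𝕜 → 𝕜} (hf : ConvexOn 𝕜 s f) {a b u v : 𝕜}
    (ha : a ∈ s) (hb : b ∈ s) (hau : a ≤ u) (hub : u ≤ b) (huv : u + v = a + b) :
    f u + f v ≤ f a + f b := by
  rcases (hau.trans hub).eq_or_lt with rfl | hab
  · obtain rfl : u = a := le_antisymm hub hau
    obtain rfl : v = u := by linarith
    rfl
  -- `u`, `v` are the convex combinations of `a`, `b` with weights `(θ, 1 - θ)`, `(1 - θ, θ)`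
  set θ := (b - u) / (b - a)
  have hba : 0 < b - a := sub_pos.mpr hab
  have hθ₀ : 0 ≤ θ := div_nonneg (sub_nonneg.mpr hub) hba.le
  have hθ₁ : 0 ≤ 1 - θ := by
    rw [sub_nonneg, div_le_one hba]; linarith
  have hθ : θ * (b - a) = b - u := div_mul_cancel₀ _ hba.ne'
  have hu := hf.2 ha hb hθ₀ hθ₁ (add_sub_cancel θ 1)
  have hv := hf.2 ha hb hθ₁ hθ₀ (sub_add_cancel 1 θ)
  simp only [smul_eq_mul] at hu hv
  rw [show θ * a + (1 - θ) * b = u by linear_combination -hθ] at hu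
  rw [show (1 - θ) * a + θ * b = v by linear_combination hθ - huv] at hv
  linarith

theorem convexOn_abs_rpow {p : ℝ} (hp : 1 ≤ p) : ConvexOn ℝ Set.univ fun t : ℝ => |t| ^ p := by
  have himage : (fun t : ℝ => |t|) '' Set.univ = Set.Ici 0 := by
    ext t
    simpa using ⟨fun ⟨y, hy⟩ => hy ▸ abs_nonneg y, fun ht => ⟨t, abs_of_nonneg ht⟩⟩
  refine ConvexOn.comp (g := fun s : ℝ => s ^ p) ?_ (convexOn_univ_norm (E := ℝ)) ?_
  · rw [himage]; exact convexOn_rpow hp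
  · rw [himage]; exact Real.monotoneOn_rpow_Ici_of_exponent_nonneg (zero_le_one.trans hp)

def IsMonge {ι κ : Type*} [Preorder ι] [Preorder κ] (C : ι → κ → ℝ) : Prop :=
  ∀ ⦃i i' j j'⦄, i ≤ i' → j ≤ j' → C i j + C i' j' ≤ C i j' + C i' j

theorem IsMonge.comp_monotone {ι κ ι' κ' : Type*} [Preorder ι] [Preorder κ] [Preorder ι']
    [Preorder κ'] {C : ι → κ → ℝ} (hC : IsMonge C) {f : ι' → ι} {g : κ' → κ}
    (hf : Monotone f) (hg : Monotone g) : IsMonge fun i j => C (f i) (g j) :=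
  fun _ _ _ _ hi hj => hC (hf hi) (hg hj)

theorem isMonge_of_convexOn {ι κ : Type*} [Preorder ι] [Preorder κ] {h : ℝ → ℝ}
    (hh : ConvexOn ℝ Set.univ h) {x : ι → ℝ} {y : κ → ℝ} (hx : Monotone x) (hy : Monotone y) :
    IsMonge fun i j => h (x i - y j) := by
  intro i i' j j' hi hj
  have hxi := hx hi
  have hyj := hy hj
  exact hh.map_add_map_le_of_add_eq (Set.mem_univ _) (Set.mem_univ _)
    (by linarith) (by linarith) (by ring)

theorem IsMonge.exists_potentials_nat {C : ℕ → ℕ → ℝ} (hC : IsMonge C) :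
    ∃ φ ψ : ℕ → ℝ, (∀ i j, φ i + ψ j ≤ C i j) ∧ ∀ i, φ i + ψ i = C i i := by
  set φ : ℕ → ℝ := fun m => ∑ k ∈ range m, (C (k + 1) k - C k k)
  have hφ (m : ℕ) : φ (m + 1) = φ m + (C (m + 1) m - C m m) := sum_range_succ _ _
  refine ⟨φ, fun j => C j j - φ j, fun i j => ?_, fun i => by ring⟩
  suffices φ i - φ j ≤ C i j - C j j by linarith
  rcases le_total j i with hji | hij
  · induction i, hji using Nat.le_induction with
    | base => simp
    | succ i hji ih =>
      have := hC (Nat.le_succ i) hji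
      rw [hφ]; linarith
  · induction j, hij using Nat.le_induction with
    | base => simp
    | succ j hij ih =>
      have := hC (hij.trans (Nat.le_succ j)) (Nat.le_succ j)
      rw [hφ]; linarith

theorem IsMonge.exists_potentials {n : ℕ} {C : Fin n → Fin n → ℝ} (hC : IsMonge C) :
    ∃ φ ψ : Fin n → ℝ, (∀ i j, φ i + ψ j ≤ C i j) ∧ ∀ i, φ i + ψ i = C i i := by
  cases n with
  | zero => exact ⟨0, 0, fun i => i.elim0, fun i => i.elim0⟩
  | succ m =>
    obtain ⟨φ, ψ, hle, heq⟩ :=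
      (hC.comp_monotone Fin.clamp_monotone Fin.clamp_monotone).exists_potentials_nat
    have hclamp (i : Fin (m + 1)) : Fin.clamp i m = i := by ext; simp [Nat.lt_succ_iff.mp i.2]
    exact ⟨fun i => φ i, fun j => ψ j, fun i j => by simpa [hclamp] using hle i j,
      fun i => by simpa [hclamp] using heq i⟩

theorem sum_mul_add_sum_mul_le_of_mem_transportPolytope {n m : ℕ} {a : Fin n → ℝ}
    {b : Fin m → ℝ} {P : Fin n → Fin m → ℝ} (hP : P ∈ transportPolytope a b)
    {c : Fin n → Fin m → ℝ} {φ : Fin n → ℝ} {ψ : Fin m → ℝ} (hφψ : ∀ i j, φ i + ψ j ≤ c i j) :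
    ∑ i, a i * φ i + ∑ j, b j * ψ j ≤ ∑ i, ∑ j, P i j * c i j := by
  obtain ⟨hP₀, hrow, hcol⟩ := hP
  calc ∑ i, a i * φ i + ∑ j, b j * ψ j
      = ∑ i, ∑ j, P i j * (φ i + ψ j) := by
        simp only [mul_add, sum_add_distrib, ← hrow, ← hcol, sum_mul]
        rw [sum_comm (f := fun i j => P i j * ψ j)]
    _ ≤ ∑ i, ∑ j, P i j * c i j := by
        gcongr with i _ j _
        exacts [hP₀ i j, hφψ i j]

theorem diag_mem_transportPolytope {n : ℕ} {a : Fin n → ℝ} (ha : 0 ≤ a) :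
    (fun i j => if i = j then a i else 0) ∈ transportPolytope a a :=
  ⟨fun i j => ite_nonneg (ha i) le_rfl, fun i => by simp, fun j => by simp⟩

theorem stmt6_general (n : ℕ)
    (x y : Fin n → ℝ) (hx : Monotone x) (hy : Monotone y)
    (p : ℝ) (hp : 1 ≤ p)
    (u : Fin n → ℝ) (hu : ∀ i, u i = 1 / n) :
    IsLeast ((fun P => ∑ i, ∑ j, P i j * |x i - y j| ^ p) '' transportPolytope u u)
        ((1 / n) * ∑ i, |x i - y i| ^ p)
    ∧ (fun i j => if i = j then (1 : ℝ) / n else 0) ∈ transportPolytope u u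
    ∧ (∑ i, ∑ j, (if i = j then (1 : ℝ) / n else 0) * |x i - y j| ^ p)
        = (1 / n) * ∑ i, |x i - y i| ^ p := by
  obtain rfl : u = fun _ => (1 : ℝ) / n := funext hu
  obtain ⟨φ, ψ, hle, hdiag⟩ :=
    (isMonge_of_convexOn (convexOn_abs_rpow hp) hx hy).exists_potentials
  have hmem := diag_mem_transportPolytope (a := fun _ : Fin n => (1 : ℝ) / n)
    fun _ => by positivity
  have hcost : (∑ i, ∑ j, (if i = j then (1 : ℝ) / n else 0) * |x i - y j| ^ p)
      = (1 / n) * ∑ i, |x i - y i| ^ p := by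
    simp [mul_sum]
  refine ⟨⟨⟨_, hmem, hcost⟩, ?_⟩, hmem, hcost⟩
  rintro _ ⟨P, hP, rfl⟩
  calc 1 / n * ∑ i, |x i - y i| ^ p = ∑ i, 1 / n * φ i + ∑ j, 1 / n * ψ j := by
        simp only [← hdiag, ← mul_sum, ← mul_add, sum_add_distrib]
    _ ≤ _ := sum_mul_add_sum_mul_le_of_mem_transportPolytope hP hle

theorem stmt6 (n : ℕ) (hn : 1 ≤ n)
    (x y : Fin n → ℝ) (hx : Monotone x) (hy : Monotone y)
    (p : ℝ) (hp : 1 ≤ p)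
    (u : Fin n → ℝ) (hu : ∀ i, u i = 1 / n) :
    IsLeast ((fun P => ∑ i, ∑ j, P i j * |x i - y j| ^ p) '' transportPolytope u u)
        ((1 / n) * ∑ i, |x i - y i| ^ p)
    ∧ (fun i j => if i = j then (1 : ℝ) / n else 0) ∈ transportPolytope u u
    ∧ (∑ i, ∑ j, (if i = j then (1 : ℝ) / n else 0) * |x i - y j| ^ p)
        = (1 / n) * ∑ i, |x i - y i| ^ p :=
  stmt6_general n x y hx hy p hp u hu
end

section
/- Let N ≥ 1 and for each r ∈ {1,…,N} let μ_r be a finitely supported probability measure on ℝ, given by a probability vector a^r ∈ ℝ^{n_r} and points x^r : {1,…,n_r} → ℝ. For r, s ∈ {1,…,N} let W₁(r,s) denote the infimum over P ∈ U(a^r, a^s) of ∑_{i,j} P_{ij} |x^r_i − x^s_j|. Then W₁ is conditionally negative definite: for all c ∈ ℝ^N with ∑_{r=1}^N c_r = 0, one has ∑_{r=1}^N ∑_{s=1}^N c_r c_s W₁(r,s) ≤ 0. -/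
/-!
On the real line, `|u - w| = ∫ |𝟙[u ≤ v] - 𝟙[w ≤ v]| dv`; for finitely many points the integral is
a finite sum over the gaps of a sorted enumeration `t` of the points. Every coupling `P` of `a` and
`b` therefore costs at least `∑ₖ (t (k+1) - t k) |F_a (t k) - F_b (t k)|`, with `F` the CDFs, and
the comonotone coupling (joint distribution function `min (F_a v) (F_b w)`) attains this bound.
So `W₁(r, s)` is a nonnegative combination of kernels `|F_r (t k) - F_s (t k)|`, and `|p - q|` is
conditionally negative definite because it is again a nonnegative combination of the kernels
`(𝟙[p ≤ v] - 𝟙[q ≤ v])²`, for which `∑ c_r c_s (p_r - p_s)² = -2 (∑ c_r p_r)²` when `∑ c_r = 0`.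
-/

open Finset

/-- A probability vector: nonnegative entries summing to 1. -/
def IsProbVec {n : ℕ} (a : Fin n → ℝ) : Prop :=
  (∀ i, 0 ≤ a i) ∧ ∑ i, a i = 1

open Classical in
noncomputable def ind (p : Prop) : ℝ := if p then 1 else 0

lemma abs_ind_sub_ind (p q : Prop) : |ind p - ind q| = ind p + ind q - 2 * (ind p * ind q) := by
  unfold ind; split_ifs <;> norm_num

lemma abs_ind_sub_ind_eq_sq (p q : Prop) : |ind p - ind q| = (ind p - ind q) ^ 2 := by
  unfold ind; split_ifs <;> norm_num

def IsCondNegDef {ι : Type*} [Fintype ι] (D : ι → ι → ℝ) : Prop :=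
  ∀ c : ι → ℝ, ∑ r, c r = 0 → ∑ r, ∑ s, c r * c s * D r s ≤ 0

section CondNegDef

variable {ι : Type*} [Fintype ι]

lemma sum_sum_mul_mul_sub_sq {c : ι → ℝ} (hc : ∑ r, c r = 0) (p : ι → ℝ) :
    ∑ r, ∑ s, c r * c s * (p r - p s) ^ 2 = -2 * (∑ r, c r * p r) ^ 2 := by
  have expand : ∀ r s, c r * c s * (p r - p s) ^ 2
      = c s * (c r * p r ^ 2) + c r * (c s * p s ^ 2) - 2 * (c r * p r) * (c s * p s) := by
    intro r s; ring
  simp only [expand, sum_sub_distrib, sum_add_distrib, ← mul_sum, ← sum_mul, hc]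
  ring

lemma isCondNegDef_sq_sub (p : ι → ℝ) : IsCondNegDef fun r s => (p r - p s) ^ 2 := fun c hc => by
  rw [sum_sum_mul_mul_sub_sq hc]
  nlinarith [sq_nonneg (∑ r, c r * p r)]

lemma IsCondNegDef.sum_mul {κ : Type*} {S : Finset κ} {w : κ → ℝ} {D : κ → ι → ι → ℝ}
    (hw : ∀ k ∈ S, 0 ≤ w k) (hD : ∀ k ∈ S, IsCondNegDef (D k)) :
    IsCondNegDef fun r s => ∑ k ∈ S, w k * D k r s := fun c hc => by
  calc ∑ r, ∑ s, c r * c s * ∑ k ∈ S, w k * D k r s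
      = ∑ r, ∑ s, ∑ k ∈ S, w k * (c r * c s * D k r s) := by
        simp only [mul_sum, mul_left_comm]
    _ = ∑ k ∈ S, w k * ∑ r, ∑ s, c r * c s * D k r s := by
        rw [(sum_congr rfl fun r _ => sum_comm).trans sum_comm]
        simp only [mul_sum]
    _ ≤ 0 := sum_nonpos fun k hk => mul_nonpos_of_nonneg_of_nonpos (hw k hk) (hD k hk c hc)

end CondNegDef

section LayerCake

variable {t : ℕ → ℝ}

-- For `k < i` with `t i ≤ t k`, monotonicity forces the gap `t (k + 1) - t k` to vanish.
lemma sub_mul_ind_le_eq (ht : Monotone t) (i k : ℕ) :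
    (t (k + 1) - t k) * ind (t i ≤ t k) = (t (k + 1) - t k) * ind (i ≤ k) := by
  by_cases hik : i ≤ k
  · simp [ind, hik, ht hik]
  · have : t i ≤ t k → t (k + 1) = t k := fun h =>
      le_antisymm ((ht (by omega : k + 1 ≤ i)).trans h) (ht k.le_succ)
    unfold ind; split_ifs <;> simp_all

lemma sum_layers_ind_le (ht : Monotone t) {K i : ℕ} (hi : i ≤ K) :
    ∑ k ∈ range K, (t (k + 1) - t k) * ind (t i ≤ t k) = t K - t i := by
  simp only [sub_mul_ind_le_eq ht]
  simp only [ind, mul_ite, mul_one, mul_zero]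
  rw [← sum_filter, ← sum_Ico_sub t hi]
  congr 1
  ext k; simp only [mem_filter, mem_range, mem_Ico]; omega

lemma abs_sub_eq_sum_layers (ht : Monotone t) {K : ℕ} {u w : ℝ} (hu : u ∈ t '' Set.Iic K)
    (hw : w ∈ t '' Set.Iic K) :
    |u - w| = ∑ k ∈ range K, (t (k + 1) - t k) * |ind (u ≤ t k) - ind (w ≤ t k)| := by
  wlog huw : u ≤ w generalizing u w
  · simp only [abs_sub_comm u w, abs_sub_comm (ind (u ≤ _))]
    exact this hw hu (le_of_not_ge huw)
  obtain ⟨i, hi, rfl⟩ := hu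
  obtain ⟨j, hj, rfl⟩ := hw
  have : ∀ v, |ind (t i ≤ v) - ind (t j ≤ v)| = ind (t i ≤ v) - ind (t j ≤ v) := fun v => by
    have : t j ≤ v → t i ≤ v := huw.trans
    unfold ind; split_ifs <;> simp_all
  simp only [this, mul_sub, sum_sub_distrib, sum_layers_ind_le ht hi, sum_layers_ind_le ht hj,
    abs_of_nonpos (sub_nonpos.2 huw)]
  ring

end LayerCake

lemma Finset.exists_monotone_cover {α : Type*} [LinearOrder α] [Nonempty α] (T : Finset α) :
    ∃ (t : ℕ → α) (K : ℕ), Monotone t ∧ ∀ u ∈ T, u ∈ t '' Set.Iic K := by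
  rcases T.eq_empty_or_nonempty with rfl | hT
  · exact ⟨fun _ => Classical.arbitrary α, 0, monotone_const, by simp⟩
  obtain ⟨K, hK⟩ : ∃ K, T.card = K + 1 := Nat.exists_eq_succ_of_ne_zero hT.card_pos.ne'
  let e := T.orderEmbOfFin hK
  refine ⟨fun k => e ⟨min k K, by omega⟩, K,
    fun k l hkl => e.monotone (Fin.mk_le_mk.2 (min_le_min_right K hkl)), fun u hu => ?_⟩
  obtain ⟨i, rfl⟩ : u ∈ Set.range e := by rwa [T.range_orderEmbOfFin hK]
  exact ⟨i, Nat.lt_succ_iff.1 i.2, by simp [Nat.lt_succ_iff.1 i.2]⟩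

lemma isCondNegDef_abs_sub {ι : Type*} [Fintype ι] (p : ι → ℝ) :
    IsCondNegDef fun r s => |p r - p s| := by
  classical
  obtain ⟨t, K, ht, hcover⟩ := (univ.image p).exists_monotone_cover
  have hp : ∀ r, p r ∈ t '' Set.Iic K := fun r => hcover _ (mem_image_of_mem p (mem_univ r))
  have : (fun r s => |p r - p s|) =
      fun r s => ∑ k ∈ range K, (t (k + 1) - t k) * (ind (p r ≤ t k) - ind (p s ≤ t k)) ^ 2 := by
    funext r s
    simp only [abs_sub_eq_sum_layers ht (hp r) (hp s), abs_ind_sub_ind_eq_sq]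
  rw [this]
  exact IsCondNegDef.sum_mul (fun k _ => sub_nonneg.2 (ht k.le_succ))
    fun k _ => isCondNegDef_sq_sub _

lemma Monotone.exists_forall_le_iff_lt {α : Type*} [LinearOrder α] {n : ℕ} {f : Fin n → α}
    (hf : Monotone f) (v : α) : ∃ p ≤ n, ∀ i : Fin n, f i ≤ v ↔ (i : ℕ) < p := by
  classical
  have hex : ∃ k, n ≤ k ∨ ∃ h : k < n, v < f ⟨k, h⟩ := ⟨n, .inl le_rfl⟩
  refine ⟨Nat.find hex, Nat.find_le (.inl le_rfl), fun i => ⟨fun hi => ?_, fun hi => ?_⟩⟩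
  · by_contra hp
    rcases Nat.find_spec hex with h | ⟨h, hv⟩
    · omega
    · exact (hv.trans_le (hf (Fin.mk_le_mk.2 (not_lt.1 hp)))).not_ge hi
  · have := Nat.find_min hex hi
    exact not_lt.1 fun h => this (.inr ⟨i.2, h⟩)

lemma Fin.sum_mul_ind_lt {n p : ℕ} (hp : p ≤ n) (f : ℕ → ℝ) :
    ∑ i : Fin n, f i * ind ((i : ℕ) < p) = ∑ i ∈ range p, f i := by
  rw [Fin.sum_univ_eq_sum_range (fun i => f i * ind (i < p))]
  simp only [ind, mul_ite, mul_one, mul_zero]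
  rw [← sum_filter]
  congr 1
  ext i; simp only [mem_filter, mem_range]; omega

lemma Fin.sum_sum_mul_ind_lt_mul_ind_lt {n m p q : ℕ} (hp : p ≤ n) (hq : q ≤ m) (g : ℕ → ℕ → ℝ) :
    ∑ i : Fin n, ∑ j : Fin m, g i j * (ind ((i : ℕ) < p) * ind ((j : ℕ) < q))
      = ∑ i ∈ range p, ∑ j ∈ range q, g i j := by
  rw [← Fin.sum_mul_ind_lt hp]
  refine sum_congr rfl fun i _ => ?_
  rw [← Fin.sum_mul_ind_lt hq, sum_mul]
  exact sum_congr rfl fun j _ => by ring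

noncomputable def cumSum {n : ℕ} (a : Fin n → ℝ) (k : ℕ) : ℝ := ∑ i, a i * ind ((i : ℕ) < k)

section CumSum

variable {n : ℕ} (a : Fin n → ℝ)

lemma cumSum_zero : cumSum a 0 = 0 := by simp [cumSum, ind]

lemma cumSum_of_le {k : ℕ} (hk : n ≤ k) : cumSum a k = ∑ i, a i := by
  simp only [cumSum]
  exact sum_congr rfl fun i _ => by simp [ind, i.2.trans_le hk]

lemma cumSum_succ_sub (i : Fin n) : cumSum a (i + 1) - cumSum a i = a i := by
  rw [cumSum, cumSum, ← sum_sub_distrib, sum_eq_single i (fun j _ hji => ?_) (by simp)]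
  · simp [ind]
  · have : (j : ℕ) < i + 1 ↔ (j : ℕ) < i := by have := Fin.val_ne_of_ne hji; omega
    simp [this]

variable {a}

lemma monotone_cumSum (ha : ∀ i, 0 ≤ a i) : Monotone (cumSum a) := fun k l hkl =>
  sum_le_sum fun i _ => mul_le_mul_of_nonneg_left
    (by unfold ind; split_ifs <;> first | omega | norm_num) (ha i)

end CumSum

def rectIncr (H : ℕ → ℕ → ℝ) (i j : ℕ) : ℝ := H (i + 1) (j + 1) - H i (j + 1) - H (i + 1) j + H i j

section RectIncr

variable (H : ℕ → ℕ → ℝ)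

lemma sum_range_rectIncr_right (i q : ℕ) :
    ∑ j ∈ range q, rectIncr H i j = (H (i + 1) q - H i q) - (H (i + 1) 0 - H i 0) := by
  rw [← sum_range_sub (fun j => H (i + 1) j - H i j)]
  exact sum_congr rfl fun j _ => by simp only [rectIncr]; ring

lemma sum_range_rectIncr_left (p j : ℕ) :
    ∑ i ∈ range p, rectIncr H i j = (H p (j + 1) - H p j) - (H 0 (j + 1) - H 0 j) := by
  rw [← sum_range_sub (fun i => H i (j + 1) - H i j)]
  exact sum_congr rfl fun i _ => by simp only [rectIncr]; ring

lemma sum_range_sum_range_rectIncr (p q : ℕ) :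
    ∑ i ∈ range p, ∑ j ∈ range q, rectIncr H i j = H p q - H 0 q - H p 0 + H 0 0 := by
  rw [show H p q - H 0 q - H p 0 + H 0 0 = (H p q - H p 0) - (H 0 q - H 0 0) by ring,
    ← sum_range_sub (fun i => H i q - H i 0)]
  exact sum_congr rfl fun i _ => by rw [sum_range_rectIncr_right]; ring

lemma rectIncr_min_nonneg {A B : ℕ → ℝ} (hA : Monotone A) (hB : Monotone B) (i j : ℕ) :
    0 ≤ rectIncr (fun p q => min (A p) (B q)) i j := by
  have := hA i.le_succ
  have := hB j.le_succ
  simp only [rectIncr, min_def]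
  split_ifs <;> linarith

end RectIncr

noncomputable def discreteCDF {n : ℕ} (a x : Fin n → ℝ) (v : ℝ) : ℝ := ∑ i, a i * ind (x i ≤ v)

section Transport

variable {n m : ℕ} {a : Fin n → ℝ} {b : Fin m → ℝ} {P : Fin n → Fin m → ℝ}

lemma discreteCDF_comp_perm (a x : Fin n → ℝ) (σ : Equiv.Perm (Fin n)) (v : ℝ) :
    discreteCDF (a ∘ σ) (x ∘ σ) v = discreteCDF a x v :=
  Equiv.sum_comp σ fun i => a i * ind (x i ≤ v)

lemma IsProbVec.comp_perm (ha : IsProbVec a) (σ : Equiv.Perm (Fin n)) : IsProbVec (a ∘ σ) :=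
  ⟨fun _ => ha.1 _, (Equiv.sum_comp σ a).trans ha.2⟩

lemma perm_mem_transportPolytope (σ : Equiv.Perm (Fin n)) (τ : Equiv.Perm (Fin m))
    (hP : P ∈ transportPolytope (a ∘ σ) (b ∘ τ)) :
    (fun i j => P (σ.symm i) (τ.symm j)) ∈ transportPolytope a b := by
  refine ⟨fun i j => hP.1 _ _, fun i => ?_, fun j => ?_⟩
  · simpa using (Equiv.sum_comp τ.symm (P (σ.symm i))).trans (hP.2.1 (σ.symm i))
  · simpa using (Equiv.sum_comp σ.symm (P · (τ.symm j))).trans (hP.2.2 (τ.symm j))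

lemma sum_sum_mul_left_of_mem_transportPolytope (hP : P ∈ transportPolytope a b)
    (f : Fin n → ℝ) : ∑ i, ∑ j, P i j * f i = ∑ i, a i * f i := by
  simp only [← sum_mul, hP.2.1]

lemma sum_sum_mul_right_of_mem_transportPolytope (hP : P ∈ transportPolytope a b)
    (g : Fin m → ℝ) : ∑ i, ∑ j, P i j * g j = ∑ j, b j * g j := by
  rw [sum_comm]
  simp only [← sum_mul, hP.2.2]

lemma abs_sum_mul_sub_sum_mul_le (hP : P ∈ transportPolytope a b) (f : Fin n → ℝ)
    (g : Fin m → ℝ) : |∑ i, a i * f i - ∑ j, b j * g j| ≤ ∑ i, ∑ j, P i j * |f i - g j| := by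
  rw [← sum_sum_mul_left_of_mem_transportPolytope hP,
    ← sum_sum_mul_right_of_mem_transportPolytope hP]
  simp only [← sum_sub_distrib, ← mul_sub]
  calc |∑ i, ∑ j, P i j * (f i - g j)|
      ≤ ∑ i, ∑ j, |P i j * (f i - g j)| :=
        (abs_sum_le_sum_abs _ _).trans (sum_le_sum fun i _ => abs_sum_le_sum_abs _ _)
    _ = ∑ i, ∑ j, P i j * |f i - g j| := by simp only [abs_mul, abs_of_nonneg (hP.1 _ _)]

lemma sum_sum_mul_abs_ind_sub_ind (hP : P ∈ transportPolytope a b)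
    (p : Fin n → Prop) (q : Fin m → Prop) :
    ∑ i, ∑ j, P i j * |ind (p i) - ind (q j)|
      = ∑ i, a i * ind (p i) + ∑ j, b j * ind (q j)
        - 2 * ∑ i, ∑ j, P i j * (ind (p i) * ind (q j)) := by
  simp only [abs_ind_sub_ind, mul_sub, mul_add, sum_sub_distrib, sum_add_distrib, mul_sum,
    sum_sum_mul_left_of_mem_transportPolytope hP, sum_sum_mul_right_of_mem_transportPolytope hP,
    mul_left_comm (2 : ℝ)]

end Transport

section Comonotone

variable {n m : ℕ} {a : Fin n → ℝ} {b : Fin m → ℝ}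

theorem exists_coupling_sum_mul_ind_lt_eq_min (ha : IsProbVec a) (hb : IsProbVec b) :
    ∃ P ∈ transportPolytope a b, ∀ p ≤ n, ∀ q ≤ m,
      ∑ i, ∑ j, P i j * (ind ((i : ℕ) < p) * ind ((j : ℕ) < q))
        = min (cumSum a p) (cumSum b q) := by
  have hA := monotone_cumSum ha.1
  have hB := monotone_cumSum hb.1
  have hA1 : cumSum a n = 1 := (cumSum_of_le a le_rfl).trans ha.2
  have hB1 : cumSum b m = 1 := (cumSum_of_le b le_rfl).trans hb.2
  have hA0 : ∀ k, 0 ≤ cumSum a k := fun k => cumSum_zero a ▸ hA (Nat.zero_le k)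
  have hB0 : ∀ k, 0 ≤ cumSum b k := fun k => cumSum_zero b ▸ hB (Nat.zero_le k)
  -- the mass of cell `(i, j)` under the joint CDF `(p, q) ↦ min (cumSum a p) (cumSum b q)`
  refine ⟨fun i j => rectIncr (fun p q => min (cumSum a p) (cumSum b q)) i j,
    ⟨fun i j => rectIncr_min_nonneg hA hB i j, fun i => ?_, fun j => ?_⟩, fun p hp q hq => ?_⟩
  · have hi : cumSum a (i + 1) ≤ 1 := hA1 ▸ hA i.2
    rw [Fin.sum_univ_eq_sum_range (rectIncr _ i), sum_range_rectIncr_right, hB1, cumSum_zero,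
      min_eq_left hi, min_eq_left ((hA (Nat.le_succ i)).trans hi), min_eq_right (hA0 _),
      min_eq_right (hA0 _), ← cumSum_succ_sub a i]
    ring
  · have hj : cumSum b (j + 1) ≤ 1 := hB1 ▸ hB j.2
    rw [Fin.sum_univ_eq_sum_range (rectIncr _ · j), sum_range_rectIncr_left, hA1, cumSum_zero,
      min_eq_right hj, min_eq_right ((hB (Nat.le_succ j)).trans hj), min_eq_left (hB0 _),
      min_eq_left (hB0 _), ← cumSum_succ_sub b j]
    ring
  · rw [Fin.sum_sum_mul_ind_lt_mul_ind_lt hp hq, sum_range_sum_range_rectIncr, cumSum_zero,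
      cumSum_zero, min_eq_left (hB0 _), min_eq_right (hA0 _), min_self]
    ring

theorem exists_comonotone_coupling_of_monotone (ha : IsProbVec a) (hb : IsProbVec b)
    {x : Fin n → ℝ} {y : Fin m → ℝ} (hx : Monotone x) (hy : Monotone y) :
    ∃ P ∈ transportPolytope a b, ∀ v,
      ∑ i, ∑ j, P i j * (ind (x i ≤ v) * ind (y j ≤ v))
        = min (discreteCDF a x v) (discreteCDF b y v) := by
  obtain ⟨P, hP, hPpq⟩ := exists_coupling_sum_mul_ind_lt_eq_min ha hb
  refine ⟨P, hP, fun v => ?_⟩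
  obtain ⟨p, hpn, hp⟩ := hx.exists_forall_le_iff_lt v
  obtain ⟨q, hqm, hq⟩ := hy.exists_forall_le_iff_lt v
  simpa only [discreteCDF, cumSum, hp, hq] using hPpq p hpn q hqm

theorem exists_comonotone_coupling (ha : IsProbVec a) (hb : IsProbVec b)
    (x : Fin n → ℝ) (y : Fin m → ℝ) :
    ∃ P ∈ transportPolytope a b, ∀ v,
      ∑ i, ∑ j, P i j * (ind (x i ≤ v) * ind (y j ≤ v))
        = min (discreteCDF a x v) (discreteCDF b y v) := by
  obtain ⟨P, hP, hPv⟩ := exists_comonotone_coupling_of_monotone (ha.comp_perm (Tuple.sort x))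
    (hb.comp_perm (Tuple.sort y)) (Tuple.monotone_sort x) (Tuple.monotone_sort y)
  refine ⟨_, perm_mem_transportPolytope _ _ hP, fun v => ?_⟩
  rw [← discreteCDF_comp_perm a x (Tuple.sort x), ← discreteCDF_comp_perm b y (Tuple.sort y), ← hPv,
    ← Equiv.sum_comp (Tuple.sort x)]
  refine sum_congr rfl fun i _ => ?_
  rw [← Equiv.sum_comp (Tuple.sort y)]
  simp

theorem exists_coupling_sum_sum_mul_abs_ind_sub_ind (ha : IsProbVec a) (hb : IsProbVec b)
    (x : Fin n → ℝ) (y : Fin m → ℝ) :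
    ∃ P ∈ transportPolytope a b, ∀ v,
      ∑ i, ∑ j, P i j * |ind (x i ≤ v) - ind (y j ≤ v)|
        = |discreteCDF a x v - discreteCDF b y v| := by
  obtain ⟨P, hP, hPv⟩ := exists_comonotone_coupling ha hb x y
  refine ⟨P, hP, fun v => ?_⟩
  rw [sum_sum_mul_abs_ind_sub_ind hP, hPv, ← max_sub_min_eq_abs']
  change discreteCDF a x v + discreteCDF b y v - _ = _
  linarith [min_add_max (discreteCDF a x v) (discreteCDF b y v)]

end Comonotone

theorem sInf_transportCost_eq_sum_layers {n m : ℕ} {a : Fin n → ℝ} {b : Fin m → ℝ}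
    (ha : IsProbVec a) (hb : IsProbVec b) {x : Fin n → ℝ} {y : Fin m → ℝ} {t : ℕ → ℝ}
    (ht : Monotone t) {K : ℕ} (hx : ∀ i, x i ∈ t '' Set.Iic K) (hy : ∀ j, y j ∈ t '' Set.Iic K) :
    sInf ((fun P => ∑ i, ∑ j, P i j * |x i - y j|) '' transportPolytope a b)
      = ∑ k ∈ range K, (t (k + 1) - t k) * |discreteCDF a x (t k) - discreteCDF b y (t k)| := by
  have hcost : ∀ P : Fin n → Fin m → ℝ, ∑ i, ∑ j, P i j * |x i - y j| = ∑ k ∈ range K,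
      (t (k + 1) - t k) * ∑ i, ∑ j, P i j * |ind (x i ≤ t k) - ind (y j ≤ t k)| := by
    intro P
    simp only [abs_sub_eq_sum_layers ht (hx _) (hy _), mul_sum]
    rw [(sum_congr rfl fun i _ => sum_comm).trans sum_comm]
    exact sum_congr rfl fun k _ => sum_congr rfl fun i _ => sum_congr rfl fun j _ => by ring
  refine IsLeast.csInf_eq ⟨?_, ?_⟩
  · obtain ⟨P, hP, hPv⟩ := exists_coupling_sum_sum_mul_abs_ind_sub_ind ha hb x y
    exact ⟨P, hP, by simp only [hcost, hPv]⟩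
  · rintro _ ⟨P, hP, rfl⟩
    refine (sum_le_sum fun k _ => ?_).trans_eq (hcost P).symm
    exact mul_le_mul_of_nonneg_left (abs_sum_mul_sub_sum_mul_le hP _ _)
      (sub_nonneg.2 (ht k.le_succ))

theorem stmt7_general (N : ℕ)
    (n : Fin N → ℕ)
    (a : (r : Fin N) → Fin (n r) → ℝ) (ha : ∀ r, IsProbVec (a r))
    (x : (r : Fin N) → Fin (n r) → ℝ)
    (W1 : Fin N → Fin N → ℝ)
    (hW : ∀ r s, W1 r s =
      sInf ((fun P => ∑ i, ∑ j, P i j * |x r i - x s j|) ''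
        transportPolytope (a r) (a s)))
    (c : Fin N → ℝ) (hc : ∑ r, c r = 0) :
    ∑ r, ∑ s, c r * c s * W1 r s ≤ 0 := by
  classical
  obtain ⟨t, K, ht, hcover⟩ :=
    (univ.image fun p : (r : Fin N) × Fin (n r) => x p.1 p.2).exists_monotone_cover
  have hx : ∀ r i, x r i ∈ t '' Set.Iic K := fun r i =>
    hcover _ (mem_image_of_mem _ (mem_univ (⟨r, i⟩ : (r : Fin N) × Fin (n r))))
  have hW1 : W1 = fun r s => ∑ k ∈ range K,
      (t (k + 1) - t k) * |discreteCDF (a r) (x r) (t k) - discreteCDF (a s) (x s) (t k)| := by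
    funext r s
    rw [hW, sInf_transportCost_eq_sum_layers (ha r) (ha s) ht (hx r) (hx s)]
  rw [hW1]
  exact IsCondNegDef.sum_mul (fun k _ => sub_nonneg.2 (ht k.le_succ))
    (fun k _ => isCondNegDef_abs_sub fun r => discreteCDF (a r) (x r) (t k)) c hc

theorem stmt7 (N : ℕ) (hN : 1 ≤ N)
    (n : Fin N → ℕ) (hn : ∀ r, 1 ≤ n r)
    (a : (r : Fin N) → Fin (n r) → ℝ) (ha : ∀ r, IsProbVec (a r))
    (x : (r : Fin N) → Fin (n r) → ℝ)
    (W1 : Fin N → Fin N → ℝ)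
    (hW : ∀ r s, W1 r s =
      sInf ((fun P => ∑ i, ∑ j, P i j * |x r i - x s j|) ''
        transportPolytope (a r) (a s)))
    (c : Fin N → ℝ) (hc : ∑ r, c r = 0) :
    ∑ r, ∑ s, c r * c s * W1 r s ≤ 0 :=
  stmt7_general N n a ha x W1 hW c hc
end

section
/- Let S¹ = (a¹, C¹) and S² = (a², C²) be two MMSets with a¹ ∈ ℝ^n, a² ∈ ℝ^m probability vectors and C¹ ∈ ℝ^{n×n}, C² ∈ ℝ^{m×m}, and let p ∈ {1,2}. For rows i of C¹ and j of C² define W^{12}(i,j) as the infimum over Q ∈ U(a¹,a²) of ∑_{k,l} Q_{kl} |C¹_{ik} − C²_{jl}|^p, and analogously W^{11}(i,j) over U(a¹,a¹) with rows i, j of C¹, and W^{22}(i,j) over U(a²,a²) with rows i, j of C². Then the Anchor Energy distance AE_p(S¹,S²) := 2 ∑_{i,j} a¹_i a²_j W^{12}(i,j) − ∑_{i,j} a¹_i a¹_j W^{11}(i,j) − ∑_{i,j} a²_i a²_j W^{22}(i,j) is nonnegative. -/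
open Finset

/-!
On the line, the monotone (quantile) coupling of two discrete measures maximizes the mass of
every product of sublevel sets; by a layer-cake argument it therefore maximizes every correlation
`∑ Q k l * u k * v l` of functions `u`, `v` monotone along the supports. Both costs `|x - y| ^ 2`
and `|x - y| = ∫ (1[t < x] - 1[t < y]) ^ 2 dt` are such correlations up to terms fixed by the
marginals, so the monotone coupling is optimal for `p = 1, 2`, and every `W(i, j)` is
`∫₀¹ |F⁻¹ - G⁻¹| ^ p` for the quantile functions of the two anchor distributions. Then `AE_p` is
the integral over `u ∈ (0, 1]` of the energy defect of the points `F_i⁻¹ u`, `G_j⁻¹ u`. For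
`p = 2` that defect is `2 (∑ a¹ F⁻¹ u - ∑ a² G⁻¹ u) ^ 2 ≥ 0`, and `p = 1` reduces to `p = 2`
through the same indicator representation of `|x - y|`.
-/

open MeasureTheory Function

namespace transportPolytope

variable {n m : ℕ} {a : Fin n → ℝ} {b : Fin m → ℝ} {Q : Fin n → Fin m → ℝ}

lemma sum_sum_mul_left (hQ : Q ∈ transportPolytope a b) (u : Fin n → ℝ) :
    ∑ k, ∑ l, Q k l * u k = ∑ k, a k * u k := by
  simp_rw [← Finset.sum_mul, hQ.2.1]

lemma sum_sum_mul_right (hQ : Q ∈ transportPolytope a b) (v : Fin m → ℝ) :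
    ∑ k, ∑ l, Q k l * v l = ∑ l, b l * v l := by
  rw [Finset.sum_comm]
  simp_rw [← Finset.sum_mul, hQ.2.2]

lemma sum_sum_mul_sub_sq (hQ : Q ∈ transportPolytope a b) (u : Fin n → ℝ) (v : Fin m → ℝ) :
    ∑ k, ∑ l, Q k l * (u k - v l) ^ 2 =
      ∑ k, a k * u k ^ 2 + ∑ l, b l * v l ^ 2 - 2 * ∑ k, ∑ l, Q k l * (u k * v l) := by
  rw [← sum_sum_mul_left hQ, ← sum_sum_mul_right hQ, Finset.mul_sum]
  simp_rw [Finset.mul_sum, ← Finset.sum_add_distrib, ← Finset.sum_sub_distrib]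
  exact Finset.sum_congr rfl fun k _ => Finset.sum_congr rfl fun l _ => by ring

lemma sum_sum_le_min (hQ : Q ∈ transportPolytope a b) (S : Finset (Fin n))
    (T : Finset (Fin m)) :
    ∑ k ∈ S, ∑ l ∈ T, Q k l ≤ min (∑ k ∈ S, a k) (∑ l ∈ T, b l) := by
  refine le_min (Finset.sum_le_sum fun k _ => ?_) ?_
  · rw [← hQ.2.1 k]
    exact Finset.sum_le_sum_of_subset_of_nonneg (subset_univ T) fun l _ _ => hQ.1 k l
  · rw [Finset.sum_comm]
    refine Finset.sum_le_sum fun l _ => ?_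
    rw [← hQ.2.2 l]
    exact Finset.sum_le_sum_of_subset_of_nonneg (subset_univ S) fun k _ _ => hQ.1 k l

end transportPolytope

section QuantileCells

variable {n : ℕ} {a x : Fin n → ℝ}

noncomputable def sortRank (x : Fin n → ℝ) (k : Fin n) : ℕ := (Tuple.sort x).symm k

noncomputable def rankCumWeight (a x : Fin n → ℝ) (j : ℕ) : ℝ :=
  ∑ k with sortRank x k < j, a k

/-- The points `x k`, sorted increasingly (ties broken by `Tuple.sort`), cut `(0, 1]` into
consecutive cells of lengths `a k`. -/
noncomputable def quantileCell (a x : Fin n → ℝ) (k : Fin n) : Set ℝ :=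
  Set.Ioc (rankCumWeight a x (sortRank x k)) (rankCumWeight a x (sortRank x k + 1))

lemma sortRank_injective : Function.Injective (sortRank x) :=
  Fin.val_injective.comp (Tuple.sort x).symm.injective

lemma sortRank_lt (k : Fin n) : sortRank x k < n := ((Tuple.sort x).symm k).2

lemma sortRank_lt_sortRank_of_lt {k k' : Fin n} (h : x k < x k') :
    sortRank x k < sortRank x k' := by
  by_contra! hle
  have := Tuple.monotone_sort x (Fin.le_iff_val_le_val.mpr hle)
  simp only [Function.comp_apply, Equiv.apply_symm_apply] at this
  linarith

lemma rankCumWeight_zero : rankCumWeight a x 0 = 0 := by simp [rankCumWeight]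

lemma rankCumWeight_nonneg (ha : ∀ k, 0 ≤ a k) (j : ℕ) : 0 ≤ rankCumWeight a x j :=
  Finset.sum_nonneg fun k _ => ha k

lemma rankCumWeight_of_le (ha : ∑ k, a k = 1) {j : ℕ} (hj : n ≤ j) : rankCumWeight a x j = 1 := by
  rw [rankCumWeight, Finset.filter_true_of_mem fun k _ => (sortRank_lt k).trans_le hj, ha]

lemma rankCumWeight_mono (ha : ∀ k, 0 ≤ a k) : Monotone (rankCumWeight a x) :=
  fun _ _ hj => Finset.sum_le_sum_of_subset_of_nonneg
    (Finset.monotone_filter_right _ fun _ _ h => h.trans_le hj) fun k _ _ => ha k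

lemma rankCumWeight_succ (j : ℕ) :
    rankCumWeight a x (j + 1) = rankCumWeight a x j + ∑ k with sortRank x k = j, a k := by
  rw [rankCumWeight, rankCumWeight, ← Finset.sum_union]
  · congr 1; ext k; simp [le_iff_lt_or_eq]
  · exact Finset.disjoint_filter.mpr fun k _ h h' => h.ne h'

lemma filter_sortRank_eq_sortRank (k : Fin n) :
    univ.filter (fun k' => sortRank x k' = sortRank x k) = {k} := by
  ext k'; simp [sortRank_injective.eq_iff]

lemma rankCumWeight_succ_sortRank (k : Fin n) :
    rankCumWeight a x (sortRank x k + 1) = rankCumWeight a x (sortRank x k) + a k := by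
  rw [rankCumWeight_succ, filter_sortRank_eq_sortRank, Finset.sum_singleton]

lemma biUnion_quantileCell_sortRank_eq (j : ℕ) :
    ⋃ k ∈ univ.filter (fun k => sortRank x k = j), quantileCell a x k =
      Set.Ioc (rankCumWeight a x j) (rankCumWeight a x (j + 1)) := by
  by_cases h : ∃ k, sortRank x k = j
  · obtain ⟨k, rfl⟩ := h
    rw [filter_sortRank_eq_sortRank, Finset.set_biUnion_singleton, quantileCell]
  · push Not at h
    rw [rankCumWeight_succ, Finset.filter_false_of_mem fun k _ => h k]
    simp

lemma biUnion_quantileCell_sortRank_lt (ha : ∀ k, 0 ≤ a k) (j : ℕ) :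
    ⋃ k ∈ univ.filter (fun k => sortRank x k < j), quantileCell a x k =
      Set.Ioc 0 (rankCumWeight a x j) := by
  induction j with
  | zero => simp [rankCumWeight_zero]
  | succ j ih =>
    have hsplit : univ.filter (fun k => sortRank x k < j + 1) =
        univ.filter (fun k => sortRank x k < j) ∪ univ.filter (fun k => sortRank x k = j) := by
      ext k; simp [le_iff_lt_or_eq]
    rw [hsplit, Finset.set_biUnion_union, ih, biUnion_quantileCell_sortRank_eq,
      Set.Ioc_union_Ioc_eq_Ioc (rankCumWeight_nonneg ha j) (rankCumWeight_mono ha j.le_succ)]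

lemma iUnion_quantileCell (ha : IsProbVec a) : ⋃ k, quantileCell a x k = Set.Ioc 0 1 := by
  have h := biUnion_quantileCell_sortRank_lt (x := x) ha.1 n
  rw [rankCumWeight_of_le ha.2 le_rfl, Finset.filter_true_of_mem fun k _ => sortRank_lt k] at h
  simpa using h

lemma quantileCell_subset (ha : IsProbVec a) (k : Fin n) : quantileCell a x k ⊆ Set.Ioc 0 1 :=
  iUnion_quantileCell (x := x) ha ▸ Set.subset_iUnion _ k

lemma pairwise_disjoint_quantileCell (ha : ∀ k, 0 ≤ a k) :
    Pairwise (Disjoint on (quantileCell a x)) := by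
  have key : ∀ k k', sortRank x k < sortRank x k' →
      Disjoint (quantileCell a x k) (quantileCell a x k') := fun k k' h =>
    Set.Ioc_disjoint_Ioc_of_le (rankCumWeight_mono ha h)
  intro k k' hne
  rcases lt_or_gt_of_ne (sortRank_injective.ne hne) with h | h
  · exact key k k' h
  · exact (key k' k h).symm

lemma measurableSet_quantileCell (k : Fin n) : MeasurableSet (quantileCell a x k) :=
  measurableSet_Ioc

lemma volume_real_quantileCell (ha : ∀ k, 0 ≤ a k) (k : Fin n) :
    volume.real (quantileCell a x k) = a k := by
  rw [quantileCell, rankCumWeight_succ_sortRank, Real.volume_real_Ioc_of_le (by linarith [ha k])]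
  ring

end QuantileCells

lemma measureReal_inter_biUnion_finset {α ι : Type*} [MeasurableSpace α] {μ : Measure α}
    {A : Set α} (hA : MeasurableSet A) {s : Finset ι} {f : ι → Set α}
    (hf : (s : Set ι).PairwiseDisjoint f) (hfm : ∀ i ∈ s, MeasurableSet (f i))
    (hfμ : ∀ i ∈ s, μ (f i) ≠ ⊤) :
    μ.real (A ∩ ⋃ i ∈ s, f i) = ∑ i ∈ s, μ.real (A ∩ f i) := by
  rw [Set.inter_iUnion₂, measureReal_biUnion_finset
    (hf.mono fun i => Set.inter_subset_right) (fun i hi => hA.inter (hfm i hi))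
    (fun i hi => measure_ne_top_of_subset Set.inter_subset_right (hfμ i hi))]

section MonotoneCoupling

variable {n m : ℕ} {a x : Fin n → ℝ} {b y : Fin m → ℝ}

noncomputable def monotoneCoupling (a x : Fin n → ℝ) (b y : Fin m → ℝ) (k : Fin n) (l : Fin m) :
    ℝ :=
  volume.real (quantileCell a x k ∩ quantileCell b y l)

lemma sum_sum_monotoneCoupling (ha : ∀ k, 0 ≤ a k) (hb : ∀ l, 0 ≤ b l) (S : Finset (Fin n))
    (T : Finset (Fin m)) :
    ∑ k ∈ S, ∑ l ∈ T, monotoneCoupling a x b y k l =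
      volume.real ((⋃ k ∈ S, quantileCell a x k) ∩ ⋃ l ∈ T, quantileCell b y l) := by
  simp_rw [monotoneCoupling, ← measureReal_inter_biUnion_finset (measurableSet_quantileCell _)
    ((pairwise_disjoint_quantileCell hb).set_pairwise _) (fun l _ => measurableSet_quantileCell l)
    (fun l _ => measure_Ioc_lt_top.ne), Set.inter_comm (quantileCell a x _)]
  rw [← measureReal_inter_biUnion_finset (Finset.measurableSet_biUnion _ fun l _ =>
    measurableSet_quantileCell l) ((pairwise_disjoint_quantileCell ha).set_pairwise _)
    (fun k _ => measurableSet_quantileCell k)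
    (fun k _ => measure_Ioc_lt_top.ne), Set.inter_comm]

lemma monotoneCoupling_mem (ha : IsProbVec a) (hb : IsProbVec b) :
    monotoneCoupling a x b y ∈ transportPolytope a b := by
  refine ⟨fun k l => measureReal_nonneg, fun k => ?_, fun l => ?_⟩
  · have h := sum_sum_monotoneCoupling (x := x) (y := y) ha.1 hb.1 {k} univ
    simp only [Finset.sum_singleton, Finset.set_biUnion_singleton, Finset.mem_univ,
      Set.iUnion_true, iUnion_quantileCell hb] at h
    rw [h, Set.inter_eq_left.mpr (quantileCell_subset ha k), volume_real_quantileCell ha.1]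
  · have h := sum_sum_monotoneCoupling (x := x) (y := y) ha.1 hb.1 univ {l}
    simp only [Finset.sum_singleton, Finset.set_biUnion_singleton, Finset.mem_univ,
      Set.iUnion_true, iUnion_quantileCell ha] at h
    rw [h, Set.inter_eq_right.mpr (quantileCell_subset hb l), volume_real_quantileCell hb.1]

lemma sum_sum_monotoneCoupling_sortRank_lt (ha : ∀ k, 0 ≤ a k) (hb : ∀ l, 0 ≤ b l) (j i : ℕ) :
    ∑ k with sortRank x k < j, ∑ l with sortRank y l < i, monotoneCoupling a x b y k l =
      min (rankCumWeight a x j) (rankCumWeight b y i) := by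
  rw [sum_sum_monotoneCoupling ha hb, biUnion_quantileCell_sortRank_lt ha,
    biUnion_quantileCell_sortRank_lt hb, Set.Ioc_inter_Ioc, max_self,
    Real.volume_real_Ioc_of_le (le_min (rankCumWeight_nonneg ha j) (rankCumWeight_nonneg hb i)),
    sub_zero]

end MonotoneCoupling

section Rearrangement

variable {n m : ℕ} {a x : Fin n → ℝ} {b y : Fin m → ℝ}

lemma exists_eq_filter_sortRank_lt {S : Finset (Fin n)}
    (hS : ∀ k ∈ S, ∀ k', x k' ≤ x k → k' ∈ S) :
    ∃ j, S = univ.filter (fun k => sortRank x k < j) := by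
  refine ⟨S.sup (fun k => sortRank x k + 1), ?_⟩
  ext k
  simp only [Finset.mem_filter, Finset.mem_univ, true_and, Finset.lt_sup_iff, Nat.lt_succ_iff]
  refine ⟨fun hk => ⟨k, hk, le_rfl⟩, fun ⟨k', hk', hle⟩ => ?_⟩
  by_contra hk
  have hlt : x k' < x k := lt_of_not_ge fun h => hk (hS k' hk' k h)
  exact (sortRank_lt_sortRank_of_lt hlt).not_ge hle

lemma sum_sum_le_sum_sum_monotoneCoupling (ha : ∀ k, 0 ≤ a k) (hb : ∀ l, 0 ≤ b l)
    {Q : Fin n → Fin m → ℝ} (hQ : Q ∈ transportPolytope a b) {S : Finset (Fin n)}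
    {T : Finset (Fin m)} (hS : ∀ k ∈ S, ∀ k', x k' ≤ x k → k' ∈ S)
    (hT : ∀ l ∈ T, ∀ l', y l' ≤ y l → l' ∈ T) :
    ∑ k ∈ S, ∑ l ∈ T, Q k l ≤ ∑ k ∈ S, ∑ l ∈ T, monotoneCoupling a x b y k l := by
  obtain ⟨j, rfl⟩ := exists_eq_filter_sortRank_lt hS
  obtain ⟨i, rfl⟩ := exists_eq_filter_sortRank_lt hT
  rw [sum_sum_monotoneCoupling_sortRank_lt ha hb]
  exact transportPolytope.sum_sum_le_min hQ _ _

/-- Abel summation in integral form: `C - u k` is the length of `[u k, C]`. -/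
lemma sum_mul_nonneg_of_sum_sublevel_nonpos {ι : Type*} [Fintype ι] {w u : ι → ℝ}
    (hw : ∑ k, w k = 0) (h : ∀ s, ∑ k with u k ≤ s, w k ≤ 0) : 0 ≤ ∑ k, w k * u k := by
  set C := ∑ k, |u k|
  have hC : ∀ k, u k ≤ C := fun k =>
    (le_abs_self _).trans (Finset.single_le_sum (fun k _ => abs_nonneg (u k)) (mem_univ k))
  have hint : ∀ k, Integrable ((Set.Ici (u k)).indicator (1 : ℝ → ℝ))
      (volume.restrict (Set.Iic C)) := fun k =>
    (integrableOn_const (by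
      rw [Measure.restrict_apply measurableSet_Ici, Set.Ici_inter_Iic]
      exact measure_Icc_lt_top.ne)).integrable_indicator measurableSet_Ici
  have hlayer : ∀ k, ∫ s in Set.Iic C, (Set.Ici (u k)).indicator 1 s = C - u k := fun k => by
    rw [integral_indicator_one measurableSet_Ici, measureReal_restrict_apply measurableSet_Ici,
      Set.Ici_inter_Iic, Real.volume_real_Icc_of_le (hC k)]
  have hsum : ∑ k, w k * (C - u k) = ∫ s in Set.Iic C, ∑ k with u k ≤ s, w k := by
    simp_rw [← hlayer, ← integral_const_mul]
    rw [← integral_finsetSum _ fun k _ => (hint k).const_mul _]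
    refine integral_congr_ae (Filter.Eventually.of_forall fun s => ?_)
    simp [Finset.sum_filter, Set.indicator_apply]
  have hnonpos : ∑ k, w k * (C - u k) ≤ 0 := hsum ▸ setIntegral_nonpos measurableSet_Iic
    fun s _ => h s
  have : ∑ k, w k * (C - u k) = -∑ k, w k * u k := by
    simp only [mul_sub, Finset.sum_sub_distrib, ← Finset.sum_mul, hw, zero_mul, zero_sub]
  linarith

lemma sum_sum_mul_nonneg_of_sum_sum_sublevel_nonneg {ι κ : Type*} [Fintype ι] [Fintype κ]
    {D : ι → κ → ℝ} (hrow : ∀ k, ∑ l, D k l = 0) (hcol : ∀ l, ∑ k, D k l = 0)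
    {u : ι → ℝ} {v : κ → ℝ} (h : ∀ s t, 0 ≤ ∑ k with u k ≤ s, ∑ l with v l ≤ t, D k l) :
    0 ≤ ∑ k, ∑ l, D k l * (u k * v l) := by
  have hswap : ∑ k, ∑ l, D k l * (u k * v l) = ∑ l, (∑ k, D k l * u k) * v l := by
    rw [Finset.sum_comm]
    exact Finset.sum_congr rfl fun l _ => by rw [Finset.sum_mul]; simp only [mul_assoc]
  rw [hswap]
  refine sum_mul_nonneg_of_sum_sublevel_nonpos ?_ fun t => ?_
  · rw [Finset.sum_comm]
    simp [← Finset.sum_mul, hrow]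
  · have key : 0 ≤ ∑ k, (-∑ l with v l ≤ t, D k l) * u k := by
      refine sum_mul_nonneg_of_sum_sublevel_nonpos ?_ fun s => ?_
      · rw [Finset.sum_neg_distrib, Finset.sum_comm]
        simp [hcol]
      · rw [Finset.sum_neg_distrib, neg_nonpos]
        exact h s t
    rw [Finset.sum_comm]
    simp only [neg_mul, Finset.sum_neg_distrib, Finset.sum_mul] at key
    linarith

theorem sum_sum_mul_le_monotoneCoupling (ha : IsProbVec a) (hb : IsProbVec b)
    {Q : Fin n → Fin m → ℝ} (hQ : Q ∈ transportPolytope a b) {u : Fin n → ℝ} {v : Fin m → ℝ}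
    (hu : ∀ k k', x k ≤ x k' → u k ≤ u k') (hv : ∀ l l', y l ≤ y l' → v l ≤ v l') :
    ∑ k, ∑ l, Q k l * (u k * v l) ≤ ∑ k, ∑ l, monotoneCoupling a x b y k l * (u k * v l) := by
  have hR := monotoneCoupling_mem (x := x) (y := y) ha hb
  have key := sum_sum_mul_nonneg_of_sum_sum_sublevel_nonneg
    (D := fun k l => monotoneCoupling a x b y k l - Q k l) (u := u) (v := v)
    (fun k => by simp [Finset.sum_sub_distrib, hR.2.1, hQ.2.1])
    (fun l => by simp [Finset.sum_sub_distrib, hR.2.2, hQ.2.2])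
    (fun s t => by
      simp only [Finset.sum_sub_distrib, sub_nonneg]
      exact sum_sum_le_sum_sum_monotoneCoupling ha.1 hb.1 hQ
        (fun k hk k' hk' => by
          simp only [Finset.mem_filter, Finset.mem_univ, true_and] at hk ⊢
          exact (hu k' k hk').trans hk)
        (fun l hl l' hl' => by
          simp only [Finset.mem_filter, Finset.mem_univ, true_and] at hl ⊢
          exact (hv l' l hl').trans hl))
  simp only [sub_mul, Finset.sum_sub_distrib, sub_nonneg] at key
  exact key

end Rearrangement

section Integrals

variable {α ι κ : Type*} [MeasurableSpace α] {μ : Measure α} [Fintype ι] [Fintype κ]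

lemma integrable_sum_sum_mul (c : ι → κ → ℝ) {f : ι → κ → α → ℝ}
    (hf : ∀ i j, Integrable (f i j) μ) :
    Integrable (fun u => ∑ i, ∑ j, c i j * f i j u) μ :=
  integrable_finsetSum _ fun i _ => integrable_finsetSum _ fun j _ => (hf i j).const_mul _

lemma integral_sum_sum_mul (c : ι → κ → ℝ) {f : ι → κ → α → ℝ}
    (hf : ∀ i j, Integrable (f i j) μ) :
    ∫ u, ∑ i, ∑ j, c i j * f i j u ∂μ = ∑ i, ∑ j, c i j * ∫ u, f i j u ∂μ := by
  rw [integral_finsetSum _ fun i _ => integrable_finsetSum _ fun j _ => (hf i j).const_mul _]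
  refine Finset.sum_congr rfl fun i _ => ?_
  rw [integral_finsetSum _ fun j _ => (hf i j).const_mul _]
  simp_rw [integral_const_mul]

end Integrals

lemma sq_indicator_Iio_sub (x y t : ℝ) :
    ((Set.Iio x).indicator 1 t - (Set.Iio y).indicator 1 t) ^ 2 =
      (Set.Ico (min x y) (max x y)).indicator (1 : ℝ → ℝ) t := by
  by_cases hx : t < x <;> by_cases hy : t < y <;>
    simp [hx, hy, not_lt.mp]

lemma integrable_sq_indicator_Iio_sub (x y : ℝ) :
    Integrable (fun t => ((Set.Iio x).indicator 1 t - (Set.Iio y).indicator 1 t : ℝ) ^ 2) := by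
  simp_rw [sq_indicator_Iio_sub]
  exact (integrableOn_const measure_Ico_lt_top.ne).integrable_indicator measurableSet_Ico

lemma integral_sq_indicator_Iio_sub (x y : ℝ) :
    ∫ t, ((Set.Iio x).indicator 1 t - (Set.Iio y).indicator 1 t : ℝ) ^ 2 = |x - y| := by
  simp_rw [sq_indicator_Iio_sub]
  rw [integral_indicator_one measurableSet_Ico, Real.volume_real_Ico_of_le min_le_max,
    max_sub_min_eq_abs']

section TransportCost

variable {n m : ℕ} {a x : Fin n → ℝ} {b y : Fin m → ℝ} {Q : Fin n → Fin m → ℝ}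

lemma sum_sum_monotoneCoupling_mul_sub_sq_le (ha : IsProbVec a) (hb : IsProbVec b)
    (hQ : Q ∈ transportPolytope a b) {u : Fin n → ℝ} {v : Fin m → ℝ}
    (hu : ∀ k k', x k ≤ x k' → u k ≤ u k') (hv : ∀ l l', y l ≤ y l' → v l ≤ v l') :
    ∑ k, ∑ l, monotoneCoupling a x b y k l * (u k - v l) ^ 2 ≤
      ∑ k, ∑ l, Q k l * (u k - v l) ^ 2 := by
  rw [transportPolytope.sum_sum_mul_sub_sq (monotoneCoupling_mem ha hb),
    transportPolytope.sum_sum_mul_sub_sq hQ]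
  linarith [sum_sum_mul_le_monotoneCoupling ha hb hQ hu hv]

lemma sum_sum_monotoneCoupling_mul_abs_sub_le (ha : IsProbVec a) (hb : IsProbVec b)
    (hQ : Q ∈ transportPolytope a b) :
    ∑ k, ∑ l, monotoneCoupling a x b y k l * |x k - y l| ≤ ∑ k, ∑ l, Q k l * |x k - y l| := by
  simp_rw [← integral_sq_indicator_Iio_sub]
  rw [← integral_sum_sum_mul _ fun k l => integrable_sq_indicator_Iio_sub _ _,
    ← integral_sum_sum_mul _ fun k l => integrable_sq_indicator_Iio_sub _ _]
  refine integral_mono (integrable_sum_sum_mul _ fun k l => integrable_sq_indicator_Iio_sub _ _)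
    (integrable_sum_sum_mul _ fun k l => integrable_sq_indicator_Iio_sub _ _) fun t => ?_
  refine sum_sum_monotoneCoupling_mul_sub_sq_le ha hb hQ (fun k k' h => ?_) (fun l l' h => ?_)
  · exact Set.indicator_le_indicator_of_subset (Set.Iio_subset_Iio h) (fun _ => zero_le_one) t
  · exact Set.indicator_le_indicator_of_subset (Set.Iio_subset_Iio h) (fun _ => zero_le_one) t

theorem sum_sum_monotoneCoupling_mul_abs_sub_pow_le (ha : IsProbVec a) (hb : IsProbVec b)
    (hQ : Q ∈ transportPolytope a b) {p : ℕ} (hp : p = 1 ∨ p = 2) :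
    ∑ k, ∑ l, monotoneCoupling a x b y k l * |x k - y l| ^ p ≤
      ∑ k, ∑ l, Q k l * |x k - y l| ^ p := by
  rcases hp with rfl | rfl
  · simpa only [pow_one] using sum_sum_monotoneCoupling_mul_abs_sub_le ha hb hQ
  · simpa only [sq_abs] using
      sum_sum_monotoneCoupling_mul_sub_sq_le ha hb hQ (fun _ _ h => h) (fun _ _ h => h)

end TransportCost

section Quantile

variable {n m : ℕ} {a x : Fin n → ℝ} {b y : Fin m → ℝ}

noncomputable def quantile (a x : Fin n → ℝ) (u : ℝ) : ℝ :=
  ∑ k, (quantileCell a x k).indicator (fun _ => x k) u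

lemma quantile_eq_of_mem (ha : ∀ k, 0 ≤ a k) {k : Fin n} {u : ℝ}
    (hu : u ∈ quantileCell a x k) : quantile a x u = x k := by
  rw [quantile, Finset.sum_eq_single k (fun k' _ hk' => Set.indicator_of_notMem
    (Set.disjoint_left.mp (pairwise_disjoint_quantileCell ha hk'.symm) hu) _)
    (fun h => (h (mem_univ k)).elim), Set.indicator_of_mem hu]

lemma Ioc_zero_one_eq_iUnion_quantileCell_inter (ha : IsProbVec a) (hb : IsProbVec b) :
    Set.Ioc 0 1 = ⋃ kl : Fin n × Fin m, quantileCell a x kl.1 ∩ quantileCell b y kl.2 := by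
  rw [Set.iUnion_prod', ← Set.iUnion_inter_iUnion, iUnion_quantileCell ha,
    iUnion_quantileCell hb, Set.inter_self]

lemma pairwise_disjoint_quantileCell_inter (ha : ∀ k, 0 ≤ a k) (hb : ∀ l, 0 ≤ b l) :
    Pairwise (Disjoint on fun kl : Fin n × Fin m =>
      quantileCell a x kl.1 ∩ quantileCell b y kl.2) := by
  rintro ⟨k, l⟩ ⟨k', l'⟩ hne
  by_cases hk : k = k'
  · have hl : l ≠ l' := fun hl => hne (by rw [hk, hl])
    exact ((pairwise_disjoint_quantileCell hb hl).mono Set.inter_subset_right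
      Set.inter_subset_right)
  · exact ((pairwise_disjoint_quantileCell ha hk).mono Set.inter_subset_left
      Set.inter_subset_left)

lemma eqOn_quantile_quantileCell_inter (ha : ∀ k, 0 ≤ a k) (hb : ∀ l, 0 ≤ b l)
    (c : ℝ → ℝ → ℝ) (k : Fin n) (l : Fin m) :
    Set.EqOn (fun u => c (quantile a x u) (quantile b y u)) (fun _ => c (x k) (y l))
      (quantileCell a x k ∩ quantileCell b y l) := fun _ hu => by
  simp only [quantile_eq_of_mem ha hu.1, quantile_eq_of_mem hb hu.2]

theorem integrableOn_quantile_quantile (ha : IsProbVec a) (hb : IsProbVec b)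
    (c : ℝ → ℝ → ℝ) :
    IntegrableOn (fun u => c (quantile a x u) (quantile b y u)) (Set.Ioc 0 1) := by
  rw [Ioc_zero_one_eq_iUnion_quantileCell_inter ha hb, integrableOn_finite_iUnion]
  exact fun ⟨k, l⟩ => (integrableOn_const (measure_ne_top_of_subset Set.inter_subset_left
    measure_Ioc_lt_top.ne)).congr_fun (eqOn_quantile_quantileCell_inter ha.1 hb.1 c k l).symm
    ((measurableSet_quantileCell k).inter (measurableSet_quantileCell l))

theorem setIntegral_quantile_quantile (ha : IsProbVec a) (hb : IsProbVec b) (c : ℝ → ℝ → ℝ) :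
    ∫ u in Set.Ioc 0 1, c (quantile a x u) (quantile b y u) =
      ∑ k, ∑ l, monotoneCoupling a x b y k l * c (x k) (y l) := by
  have hmeas : ∀ kl : Fin n × Fin m,
      MeasurableSet (quantileCell a x kl.1 ∩ quantileCell b y kl.2) := fun kl =>
    (measurableSet_quantileCell _).inter (measurableSet_quantileCell _)
  have hint := integrableOn_quantile_quantile (x := x) (y := y) ha hb c
  rw [Ioc_zero_one_eq_iUnion_quantileCell_inter ha hb] at hint ⊢
  rw [integral_iUnion_fintype hmeas (pairwise_disjoint_quantileCell_inter ha.1 hb.1)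
    (integrableOn_finite_iUnion.mp hint), Fintype.sum_prod_type]
  refine Finset.sum_congr rfl fun k _ => Finset.sum_congr rfl fun l _ => ?_
  rw [setIntegral_congr_fun (hmeas (k, l)) (eqOn_quantile_quantileCell_inter ha.1 hb.1 c k l),
    setIntegral_const, smul_eq_mul, monotoneCoupling]

theorem sInf_transportCost_eq_setIntegral_quantile (ha : IsProbVec a) (hb : IsProbVec b)
    {p : ℕ} (hp : p = 1 ∨ p = 2) :
    sInf ((fun Q => ∑ k, ∑ l, Q k l * |x k - y l| ^ p) '' transportPolytope a b) =
      ∫ u in Set.Ioc 0 1, |quantile a x u - quantile b y u| ^ p := by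
  rw [setIntegral_quantile_quantile ha hb fun s t => |s - t| ^ p]
  refine IsLeast.csInf_eq ⟨⟨_, monotoneCoupling_mem ha hb, rfl⟩, ?_⟩
  rintro _ ⟨Q, hQ, rfl⟩
  exact sum_sum_monotoneCoupling_mul_abs_sub_pow_le ha hb hQ hp

end Quantile

section Energy

variable {ι κ : Type*} [Fintype ι] [Fintype κ]

lemma sum_sum_mul_mul_sub_sq_s11 (c : ι → ℝ) (d : κ → ℝ) (X : ι → ℝ) (Y : κ → ℝ) :
    ∑ i, ∑ j, c i * d j * (X i - Y j) ^ 2 =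
      (∑ j, d j) * ∑ i, c i * X i ^ 2 + (∑ i, c i) * ∑ j, d j * Y j ^ 2 -
        2 * ((∑ i, c i * X i) * ∑ j, d j * Y j) := by
  have hterm : ∀ i j, c i * d j * (X i - Y j) ^ 2 =
      c i * X i ^ 2 * d j + c i * (d j * Y j ^ 2) - 2 * (c i * X i * (d j * Y j)) :=
    fun i j => by ring
  simp only [hterm, Finset.sum_add_distrib, Finset.sum_sub_distrib, ← Finset.mul_sum,
    ← Finset.sum_mul]
  ring

lemma sum_sum_mul_sub_sq_energy_le {a : ι → ℝ} {b : κ → ℝ} (hab : ∑ i, a i = ∑ j, b j)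
    (X : ι → ℝ) (Y : κ → ℝ) :
    ∑ i, ∑ j, a i * a j * (X i - X j) ^ 2 + ∑ i, ∑ j, b i * b j * (Y i - Y j) ^ 2 ≤
      2 * ∑ i, ∑ j, a i * b j * (X i - Y j) ^ 2 := by
  simp only [sum_sum_mul_mul_sub_sq_s11, hab]
  nlinarith [sq_nonneg (∑ i, a i * X i - ∑ j, b j * Y j)]

lemma integral_energy_le {α : Type*} [MeasurableSpace α] {μ : Measure α} (a : ι → ℝ)
    (b : κ → ℝ) {F : ι → ι → α → ℝ} {G : κ → κ → α → ℝ} {H : ι → κ → α → ℝ}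
    (hF : ∀ i j, Integrable (F i j) μ) (hG : ∀ i j, Integrable (G i j) μ)
    (hH : ∀ i j, Integrable (H i j) μ)
    (h : ∀ u, ∑ i, ∑ j, a i * a j * F i j u + ∑ i, ∑ j, b i * b j * G i j u ≤
      2 * ∑ i, ∑ j, a i * b j * H i j u) :
    ∑ i, ∑ j, a i * a j * ∫ u, F i j u ∂μ + ∑ i, ∑ j, b i * b j * ∫ u, G i j u ∂μ ≤
      2 * ∑ i, ∑ j, a i * b j * ∫ u, H i j u ∂μ := by
  rw [← integral_sum_sum_mul _ hF, ← integral_sum_sum_mul _ hG, ← integral_sum_sum_mul _ hH,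
    ← integral_add (integrable_sum_sum_mul _ hF) (integrable_sum_sum_mul _ hG),
    ← integral_const_mul]
  exact integral_mono ((integrable_sum_sum_mul _ hF).add (integrable_sum_sum_mul _ hG))
    ((integrable_sum_sum_mul _ hH).const_mul 2) h

lemma sum_sum_mul_abs_sub_energy_le {a : ι → ℝ} {b : κ → ℝ} (hab : ∑ i, a i = ∑ j, b j)
    (X : ι → ℝ) (Y : κ → ℝ) :
    ∑ i, ∑ j, a i * a j * |X i - X j| + ∑ i, ∑ j, b i * b j * |Y i - Y j| ≤
      2 * ∑ i, ∑ j, a i * b j * |X i - Y j| := by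
  simp_rw [← integral_sq_indicator_Iio_sub]
  exact integral_energy_le a b (fun _ _ => integrable_sq_indicator_Iio_sub _ _)
    (fun _ _ => integrable_sq_indicator_Iio_sub _ _)
    (fun _ _ => integrable_sq_indicator_Iio_sub _ _)
    fun t => sum_sum_mul_sub_sq_energy_le hab _ _

lemma sum_sum_mul_abs_sub_pow_energy_le {a : ι → ℝ} {b : κ → ℝ} (hab : ∑ i, a i = ∑ j, b j)
    {p : ℕ} (hp : p = 1 ∨ p = 2) (X : ι → ℝ) (Y : κ → ℝ) :
    ∑ i, ∑ j, a i * a j * |X i - X j| ^ p + ∑ i, ∑ j, b i * b j * |Y i - Y j| ^ p ≤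
      2 * ∑ i, ∑ j, a i * b j * |X i - Y j| ^ p := by
  rcases hp with rfl | rfl
  · simpa only [pow_one] using sum_sum_mul_abs_sub_energy_le hab X Y
  · simpa only [sq_abs] using sum_sum_mul_sub_sq_energy_le hab X Y

end Energy

theorem stmt11_general (n m : ℕ)
    (a1 : Fin n → ℝ) (a2 : Fin m → ℝ) (ha1 : IsProbVec a1) (ha2 : IsProbVec a2)
    (C1 : Fin n → Fin n → ℝ) (C2 : Fin m → Fin m → ℝ)
    (p : ℕ) (hp : p = 1 ∨ p = 2)
    (W12 : Fin n → Fin m → ℝ) (W11 : Fin n → Fin n → ℝ) (W22 : Fin m → Fin m → ℝ)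
    (hW12 : ∀ i j, W12 i j = sInf ((fun Q => ∑ k, ∑ l, Q k l * |C1 i k - C2 j l| ^ p) ''
      transportPolytope a1 a2))
    (hW11 : ∀ i j, W11 i j = sInf ((fun Q => ∑ k, ∑ l, Q k l * |C1 i k - C1 j l| ^ p) ''
      transportPolytope a1 a1))
    (hW22 : ∀ i j, W22 i j = sInf ((fun Q => ∑ k, ∑ l, Q k l * |C2 i k - C2 j l| ^ p) ''
      transportPolytope a2 a2)) :
    0 ≤ 2 * ∑ i, ∑ j, a1 i * a2 j * W12 i j
        - ∑ i, ∑ j, a1 i * a1 j * W11 i j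
        - ∑ i, ∑ j, a2 i * a2 j * W22 i j := by
  simp only [hW12, hW11, hW22, sInf_transportCost_eq_setIntegral_quantile ha1 ha2 hp,
    sInf_transportCost_eq_setIntegral_quantile ha1 ha1 hp,
    sInf_transportCost_eq_setIntegral_quantile ha2 ha2 hp]
  have hint := fun {N M : ℕ} {c : Fin N → ℝ} {d : Fin M → ℝ} (hc : IsProbVec c)
    (hd : IsProbVec d) (X : Fin N → ℝ) (Y : Fin M → ℝ) =>
    integrableOn_quantile_quantile (x := X) (y := Y) hc hd fun s t => |s - t| ^ p
  have := integral_energy_le (μ := volume.restrict (Set.Ioc 0 1)) a1 a2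
    (fun i j => hint ha1 ha1 (C1 i) (C1 j)) (fun i j => hint ha2 ha2 (C2 i) (C2 j))
    (fun i j => hint ha1 ha2 (C1 i) (C2 j))
    fun u => sum_sum_mul_abs_sub_pow_energy_le (ha1.2.trans ha2.2.symm) hp _ _
  linarith

theorem stmt11 (n m : ℕ) (hn : 1 ≤ n) (hm : 1 ≤ m)
    (a1 : Fin n → ℝ) (a2 : Fin m → ℝ) (ha1 : IsProbVec a1) (ha2 : IsProbVec a2)
    (C1 : Fin n → Fin n → ℝ) (C2 : Fin m → Fin m → ℝ)
    (p : ℕ) (hp : p = 1 ∨ p = 2)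
    (W12 : Fin n → Fin m → ℝ) (W11 : Fin n → Fin n → ℝ) (W22 : Fin m → Fin m → ℝ)
    (hW12 : ∀ i j, W12 i j = sInf ((fun Q => ∑ k, ∑ l, Q k l * |C1 i k - C2 j l| ^ p) ''
      transportPolytope a1 a2))
    (hW11 : ∀ i j, W11 i j = sInf ((fun Q => ∑ k, ∑ l, Q k l * |C1 i k - C1 j l| ^ p) ''
      transportPolytope a1 a1))
    (hW22 : ∀ i j, W22 i j = sInf ((fun Q => ∑ k, ∑ l, Q k l * |C2 i k - C2 j l| ^ p) ''
      transportPolytope a2 a2)) :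
    0 ≤ 2 * ∑ i, ∑ j, a1 i * a2 j * W12 i j
        - ∑ i, ∑ j, a1 i * a1 j * W11 i j
        - ∑ i, ∑ j, a2 i * a2 j * W22 i j :=
  stmt11_general n m a1 a2 ha1 ha2 C1 C2 p hp W12 W11 W22 hW12 hW11 hW22
end
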